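/- Let O₁ be a periodic orbit of period π₁ of a continuous map T on a compact metric space M, and O₂ a periodic orbit of period π₂ which is an (ε, ρ)-good approximation of O₁, i.e. at least a fraction ρ of the points of O₂ ε-shadow O₁ for π₁ iterates. Then for every 1-Lipschitz function φ : M → ℝ with ‖φ‖_∞ ≤ diam(M), |∫φ dμ_{O₂} − ∫φ dμ_{O₁}| ≤ ε + 2·diam(M)·(1−ρ). -/

import Mathlib

open scoped Classical
open Finset Function

/-!
Average the Birkhoff sums of length `π₁` of `φ` over the `π₂` starting points of `O₂`: by
periodicity this total is `π₁ · ∑_{O₂} φ`, while `∑_{O₁} φ` can be computed starting from any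
point of `O₁`. For a good starting point `T^i y`, shadowed by `T^j x`, the two Birkhoff sums
differ by at most `π₁ ε` since `φ` is 1-Lipschitz; for the remaining at most `(1 - ρ) π₂`
starting points they differ by at most `2 π₁ diam M` since `|φ| ≤ diam M`.
-/

section BirkhoffSum

variable {α G : Type*}

theorem Function.IsPeriodicPt.birkhoffSum_apply [AddCommGroup G] {f : α → α} {n : ℕ} {x : α}
    (hx : IsPeriodicPt f n x) (g : α → G) :
    birkhoffSum f g n (f x) = birkhoffSum f g n x := by
  rw [← sub_eq_zero, birkhoffSum_apply_sub_birkhoffSum, hx.eq, sub_self]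

theorem Function.IsPeriodicPt.birkhoffSum_iterate [AddCommGroup G] {f : α → α} {n : ℕ}
    {x : α} (hx : IsPeriodicPt f n x) (g : α → G) (j : ℕ) :
    birkhoffSum f g n (f^[j] x) = birkhoffSum f g n x := by
  induction j with
  | zero => rfl
  | succ j ih => rw [iterate_succ_apply', (hx.apply_iterate j).birkhoffSum_apply, ih]

theorem Function.IsPeriodicPt.sum_birkhoffSum_iterate [AddCommGroup G] {f : α → α} {n : ℕ}
    {x : α} (hx : IsPeriodicPt f n x) (g : α → G) (m : ℕ) :
    ∑ i ∈ range n, birkhoffSum f g m (f^[i] x) = m • birkhoffSum f g n x := by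
  simp only [birkhoffSum]
  rw [sum_comm]
  have hswap : ∀ k, ∑ i ∈ range n, g (f^[k] (f^[i] x)) = birkhoffSum f g n x := fun k => by
    rw [← hx.birkhoffSum_iterate g k]
    exact sum_congr rfl fun i _ => by rw [← iterate_add_apply, ← iterate_add_apply, add_comm]
  simp only [hswap, sum_const, card_range, birkhoffSum]

theorem dist_birkhoffSum_le_of_forall_dist_le [NormedAddCommGroup G] {f : α → α} {g : α → G}
    {n : ℕ} {a b : α} {δ : ℝ} (h : ∀ k < n, dist (g (f^[k] a)) (g (f^[k] b)) ≤ δ) :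
    dist (birkhoffSum f g n a) (birkhoffSum f g n b) ≤ n * δ := by
  calc dist (birkhoffSum f g n a) (birkhoffSum f g n b)
      ≤ ∑ k ∈ range n, dist (g (f^[k] a)) (g (f^[k] b)) :=
        dist_birkhoffSum_birkhoffSum_le f g n a b
    _ ≤ ∑ _k ∈ range n, δ := sum_le_sum fun k hk => h k (mem_range.mp hk)
    _ = n * δ := by rw [sum_const, card_range, nsmul_eq_mul]

theorem birkhoffAverage_sub_birkhoffAverage_eq_sum_div {f : α → α} {x y : α} {m n : ℕ}
    (hy : IsPeriodicPt f n y) (hm : 0 < m) (hn : 0 < n) (g : α → ℝ) :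
    birkhoffAverage ℝ f g n y - birkhoffAverage ℝ f g m x =
      (∑ i ∈ range n, (birkhoffSum f g m (f^[i] y) - birkhoffSum f g m x)) / (m * n) := by
  rw [sum_sub_distrib, hy.sum_birkhoffSum_iterate, sum_const, card_range]
  simp only [birkhoffAverage, nsmul_eq_mul, smul_eq_mul]
  field_simp

end BirkhoffSum

theorem Finset.abs_sum_le_of_abs_le_on_large_filter {ι : Type*} {s : Finset ι} (p : ι → Prop)
    [DecidablePred p] {h : ι → ℝ} {a b ρ : ℝ} (ha : 0 ≤ a) (hb : 0 ≤ b)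
    (hp : ∀ i ∈ s, p i → |h i| ≤ a) (hs : ∀ i ∈ s, |h i| ≤ b)
    (hcard : ρ * #s ≤ #(s.filter p)) :
    |∑ i ∈ s, h i| ≤ #s * (a + b * (1 - ρ)) := by
  have hsplit : (#(s.filter p) : ℝ) + #(s.filter (¬ p ·)) = #s := by
    exact_mod_cast card_filter_add_card_filter_not p
  have hgood : ∑ i ∈ s.filter p, |h i| ≤ #(s.filter p) * a := by
    simpa using sum_le_sum fun i hi => hp i (mem_filter.mp hi).1 (mem_filter.mp hi).2
  have hbad : ∑ i ∈ s.filter (¬ p ·), |h i| ≤ #(s.filter (¬ p ·)) * b := by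
    simpa using sum_le_sum fun i hi => hs i (mem_filter.mp hi).1
  calc |∑ i ∈ s, h i| ≤ ∑ i ∈ s, |h i| := abs_sum_le_sum_abs _ _
    _ = ∑ i ∈ s.filter p, |h i| + ∑ i ∈ s.filter (¬ p ·), |h i| :=
        (sum_filter_add_sum_filter_not s p _).symm
    _ ≤ #s * (a + b * (1 - ρ)) := by nlinarith

theorem stmt6_general {M : Type*} [MetricSpace M]
    (T : M → M)
    (x y : M) (π₁ π₂ : ℕ) (hπ₁ : 0 < π₁) (hπ₂ : 0 < π₂)
    (hx : T^[π₁] x = x) (hy : T^[π₂] y = y)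
    (ε ρ : ℝ) (hε : 0 < ε)
    (hgood : ρ * (π₂ : ℝ) ≤
      ((Finset.range π₂).filter fun i => ∃ j < π₁,
        ∀ k < π₁, dist (T^[k] (T^[j] x)) (T^[k] (T^[i] y)) < ε).card)
    (φ : M → ℝ) (hφ : LipschitzWith 1 φ)
    (hφbound : ∀ z, |φ z| ≤ Metric.diam (Set.univ : Set M)) :
    |((1 : ℝ) / π₂) * ∑ i ∈ Finset.range π₂, φ (T^[i] y) -
        ((1 : ℝ) / π₁) * ∑ i ∈ Finset.range π₁, φ (T^[i] x)| ≤
      ε + 2 * Metric.diam (Set.univ : Set M) * (1 - ρ) := by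
  set D := Metric.diam (Set.univ : Set M)
  have hshadow : ∀ i ∈ range π₂, (∃ j < π₁, ∀ k < π₁,
      dist (T^[k] (T^[j] x)) (T^[k] (T^[i] y)) < ε) →
      |birkhoffSum T φ π₁ (T^[i] y) - birkhoffSum T φ π₁ x| ≤ π₁ * ε := by
    rintro i - ⟨j, -, hj⟩
    rw [← Real.dist_eq, ← IsPeriodicPt.birkhoffSum_iterate hx φ j]
    refine dist_birkhoffSum_le_of_forall_dist_le fun k hk => ?_
    simpa [dist_comm] using hφ.dist_le_mul_of_le (hj k hk).le
  have hbounded : ∀ i ∈ range π₂,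
      |birkhoffSum T φ π₁ (T^[i] y) - birkhoffSum T φ π₁ x| ≤ π₁ * (2 * D) := by
    refine fun i _ => (Real.dist_eq _ _).ge.trans
      (dist_birkhoffSum_le_of_forall_dist_le fun k _ => ?_)
    rw [Real.dist_eq, two_mul]
    exact (abs_sub _ _).trans (add_le_add (hφbound _) (hφbound _))
  have hsum := abs_sum_le_of_abs_le_on_large_filter _ (by positivity)
    (by have : 0 ≤ D := Metric.diam_nonneg; positivity) hshadow hbounded (by rwa [card_range])
  have haverage : ((1 : ℝ) / π₂) * ∑ i ∈ range π₂, φ (T^[i] y) -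
      ((1 : ℝ) / π₁) * ∑ i ∈ range π₁, φ (T^[i] x) =
      birkhoffAverage ℝ T φ π₂ y - birkhoffAverage ℝ T φ π₁ x := by
    simp only [birkhoffAverage, birkhoffSum, one_div, smul_eq_mul]
  rw [haverage, birkhoffAverage_sub_birkhoffAverage_eq_sum_div hy hπ₁ hπ₂, abs_div,
    abs_of_pos (by positivity : (0 : ℝ) < π₁ * π₂), div_le_iff₀ (by positivity)]
  rw [card_range] at hsum
  linarith

/-- If a periodic orbit `O₂` is an `(ε,ρ)`-good approximation of a periodic orbit `O₁`,
then for every 1-Lipschitz function `φ` bounded by the diameter, the integrals against the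
two orbital measures differ by at most `ε + 2·diam(M)·(1−ρ)`. -/
theorem stmt6 {M : Type*} [MetricSpace M] [CompactSpace M]
    (T : M → M) (hT : Continuous T)
    (x y : M) (π₁ π₂ : ℕ) (hπ₁ : 0 < π₁) (hπ₂ : 0 < π₂)
    (hx : T^[π₁] x = x) (hy : T^[π₂] y = y)
    (ε ρ : ℝ) (hε : 0 < ε) (hρ : 0 < ρ) (hρ1 : ρ ≤ 1)
    (hgood : ρ * (π₂ : ℝ) ≤
      ((Finset.range π₂).filter fun i => ∃ j < π₁,
        ∀ k < π₁, dist (T^[k] (T^[j] x)) (T^[k] (T^[i] y)) < ε).card)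
    (φ : M → ℝ) (hφ : LipschitzWith 1 φ)
    (hφbound : ∀ z, |φ z| ≤ Metric.diam (Set.univ : Set M)) :
    |((1 : ℝ) / π₂) * ∑ i ∈ Finset.range π₂, φ (T^[i] y) -
        ((1 : ℝ) / π₁) * ∑ i ∈ Finset.range π₁, φ (T^[i] x)| ≤
      ε + 2 * Metric.diam (Set.univ : Set M) * (1 - ρ) :=
  stmt6_general T x y π₁ π₂ hπ₁ hπ₂ hx hy ε ρ hε hgood φ hφ hφbound
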